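/- arXiv:0809.1188 — 2 statements merged into one kernel-verified Lean document; each statement's English description precedes it below -/
import Mathlib

section
/- Every IP polygon is reflexive: if Δ ⊆ ℝ² is a 2-dimensional lattice polytope whose interior contains exactly one lattice point, namely the origin, then the polar dual Δ* is a lattice polytope. -/
/-! The polar dual of a polygon with `0` in its interior is compact and convex, so by
Krein–Milman it is the convex hull of its extreme points, and it suffices that these are lattice
points (there are then finitely many). An extreme point `y` satisfies `y ⬝ᵥ v₁ = y ⬝ᵥ v₂ = -1` for
two linearly independent lattice points `v₁, v₂` of `Δ`, so `{x | y ⬝ᵥ x = -1}` is the line through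
them. If this line had lattice distance `a ≥ 2` from the origin, the parallel lattice line at
distance `a - 1` would meet the triangle `0 v₁ v₂` in a lattice point, a nonzero interior lattice
point of `Δ`. Hence `a = 1`, which says that `y` is minus a primitive integer normal of the line. -/

/-- A point of `ℝ^d` is a lattice point if all its coordinates are integers. -/
def IsLatticePoint {d : ℕ} (x : Fin d → ℝ) : Prop := ∀ i, ∃ z : ℤ, x i = (z : ℝ)

/-- A lattice polytope in `ℝ^d` is the convex hull of a finite set of lattice points. -/
def IsLatticePolytope {d : ℕ} (P : Set (Fin d → ℝ)) : Prop :=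
  ∃ V : Finset (Fin d → ℝ), (∀ v ∈ V, IsLatticePoint v) ∧ P = convexHull ℝ (V : Set (Fin d → ℝ))

/-- An IP polytope: a full-dimensional lattice polytope whose interior contains exactly one
lattice point, namely the origin. -/
def IsIPPolytope {d : ℕ} (P : Set (Fin d → ℝ)) : Prop :=
  IsLatticePolytope P ∧ (0 : Fin d → ℝ) ∈ interior P ∧
    ∀ x ∈ interior P, IsLatticePoint x → x = 0

/-- The polar dual of a set `P ⊆ ℝ^d`. -/
def polarDual {d : ℕ} (P : Set (Fin d → ℝ)) : Set (Fin d → ℝ) :=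
  {y | ∀ x ∈ P, -1 ≤ ∑ i, y i * x i}

/-- A reflexive polytope is an IP polytope whose polar dual is a lattice polytope. -/
def IsReflexive {d : ℕ} (P : Set (Fin d → ℝ)) : Prop :=
  IsIPPolytope P ∧ IsLatticePolytope (polarDual P)

open Filter Topology

theorem Convex.mem_interior_of_smul_eq {E : Type*} [AddCommGroup E] [Module ℝ E]
    [TopologicalSpace E] [IsTopologicalAddGroup E] [ContinuousConstSMul ℝ E] {s : Set E}
    (hs : Convex ℝ s) (h0 : 0 ∈ interior s) {p q x : E} (hp : p ∈ s) (hq : q ∈ s)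
    {t μ ν : ℝ} (hμ : 0 ≤ μ) (hν : 0 ≤ ν) (hlt : μ + ν < t) (hx : t • x = μ • p + ν • q) :
    x ∈ interior s := by
  have ht : 0 < t := by linarith
  have hx' : x = t⁻¹ • (μ • p + ν • q) := by rw [← hx, inv_smul_smul₀ ht.ne']
  rcases (add_nonneg hμ hν).eq_or_lt with hzero | hpos
  · obtain rfl : μ = 0 := by linarith
    obtain rfl : ν = 0 := by linarith
    simpa [hx'] using h0
  have hr : (μ / (μ + ν)) • p + (ν / (μ + ν)) • q ∈ s :=
    hs hp hq (by positivity) (by positivity) (by field_simp)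
  have hmem := hs.combo_interior_self_mem_interior h0 hr (a := 1 - (μ + ν) / t)
    (b := (μ + ν) / t) (by rw [sub_pos, div_lt_one ht]; exact hlt) (by positivity) (by ring)
  convert hmem using 1
  rw [hx', smul_zero, zero_add]
  match_scalars <;> field_simp

section General

variable {d : ℕ}

theorem isLatticePoint_intCast (W : Fin d → ℤ) : IsLatticePoint (Int.cast ∘ W : Fin d → ℝ) :=
  fun i => ⟨W i, rfl⟩

theorem isLatticePoint_iff {x : Fin d → ℝ} :
    IsLatticePoint x ↔ ∃ W : Fin d → ℤ, (Int.cast ∘ W : Fin d → ℝ) = x := by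
  refine ⟨fun h => ?_, fun ⟨W, hW⟩ => hW ▸ isLatticePoint_intCast W⟩
  choose W hW using h
  exact ⟨W, funext fun i => (hW i).symm⟩

theorem intCast_dotProduct {ι : Type*} [Fintype ι] (v w : ι → ℤ) :
    (Int.cast ∘ v : ι → ℝ) ⬝ᵥ (Int.cast ∘ w) = ((v ⬝ᵥ w : ℤ) : ℝ) :=
  ((Int.castRingHom ℝ).map_dotProduct v w).symm

theorem Bornology.IsBounded.finite_setOf_isLatticePoint {S : Set (Fin d → ℝ)}
    (hS : Bornology.IsBounded S) : {x ∈ S | IsLatticePoint x}.Finite := by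
  obtain ⟨R, hR⟩ := hS.subset_closedBall 0
  refine ((Set.finite_Icc (fun _ => -⌈R⌉) fun _ => ⌈R⌉).image (Int.cast ∘ ·)).subset ?_
  rintro x ⟨hxS, hx⟩
  obtain ⟨W, rfl⟩ := isLatticePoint_iff.1 hx
  have hW : ∀ i, |W i| ≤ ⌈R⌉ := fun i => by
    have := ((norm_le_pi_norm _ i).trans (mem_closedBall_zero_iff.1 (hR hxS))).trans
      (Int.le_ceil R)
    rwa [Function.comp_apply, Real.norm_eq_abs, ← Int.cast_abs, Int.cast_le] at this
  exact ⟨W, ⟨fun i => (abs_le.1 (hW i)).1, fun i => (abs_le.1 (hW i)).2⟩, rfl⟩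

theorem IsCompact.isLatticePolytope {K : Set (Fin d → ℝ)} (hK : IsCompact K)
    (hKc : Convex ℝ K) (hext : ∀ y ∈ K.extremePoints ℝ, IsLatticePoint y) :
    IsLatticePolytope K := by
  have hfin : (K.extremePoints ℝ).Finite := hK.isBounded.finite_setOf_isLatticePoint.subset
    fun y hy => ⟨extremePoints_subset hy, hext y hy⟩
  refine ⟨hfin.toFinset, fun y hy => hext y (hfin.mem_toFinset.1 hy), ?_⟩
  rw [hfin.coe_toFinset]
  exact (closure_convexHull_extremePoints hK hKc).symm.trans
    (hfin.isCompact_convexHull ℝ).isClosed.closure_eq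

theorem mem_polarDual {P : Set (Fin d → ℝ)} {y : Fin d → ℝ} :
    y ∈ polarDual P ↔ ∀ x ∈ P, -1 ≤ y ⬝ᵥ x :=
  Iff.rfl

theorem polarDual_eq_biInter (P : Set (Fin d → ℝ)) :
    polarDual P = ⋂ x ∈ P, {y | -1 ≤ y ⬝ᵥ x} := by
  ext y
  simp [mem_polarDual]

theorem isClosed_polarDual (P : Set (Fin d → ℝ)) : IsClosed (polarDual P) := by
  rw [polarDual_eq_biInter]
  exact isClosed_biInter fun x _ =>
    isClosed_le continuous_const (continuous_id.dotProduct continuous_const)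

theorem convex_polarDual (P : Set (Fin d → ℝ)) : Convex ℝ (polarDual P) := by
  rw [polarDual_eq_biInter]
  exact convex_iInter₂ fun x _ =>
    convex_halfSpace_ge ⟨fun y z => add_dotProduct y z x, fun c y => smul_dotProduct c y x⟩ _

theorem polarDual_convexHull (s : Set (Fin d → ℝ)) :
    polarDual (convexHull ℝ s) = polarDual s := by
  refine (Set.Subset.antisymm (fun y hy x hx => hy x (subset_convexHull ℝ s hx)) fun y hy => ?_)
  exact fun x hx => convexHull_min hy
    (convex_halfSpace_ge ⟨dotProduct_add y, fun c x => dotProduct_smul c y x⟩ (-1)) hx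

theorem isBounded_polarDual {P : Set (Fin d → ℝ)} (h0 : 0 ∈ interior P) :
    Bornology.IsBounded (polarDual P) := by
  obtain ⟨r, hr, hball⟩ := Metric.mem_nhds_iff.1 (mem_interior_iff_mem_nhds.1 h0)
  refine (Metric.isBounded_iff_subset_closedBall 0).2 ⟨2 / r, fun y hy => ?_⟩
  rw [mem_closedBall_zero_iff, pi_norm_le_iff_of_nonneg (by positivity)]
  intro i
  have hsingle : ∀ t : ℝ, |t| = r / 2 → -1 ≤ y i * t := fun t ht => by
    have hmem : Pi.single i t ∈ P := hball <| by
      rw [mem_ball_zero_iff, Pi.norm_single, Real.norm_eq_abs, ht]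
      linarith
    simpa only [dotProduct_single] using mem_polarDual.1 hy _ hmem
  have h₁ := hsingle (r / 2) (abs_of_pos (half_pos hr))
  have h₂ := hsingle (-(r / 2)) (by rw [abs_neg, abs_of_pos (half_pos hr)])
  rw [Real.norm_eq_abs, abs_le, ← neg_div, le_div_iff₀ hr, div_le_iff₀ hr]
  constructor <;> nlinarith

theorem isCompact_polarDual {P : Set (Fin d → ℝ)} (h0 : 0 ∈ interior P) :
    IsCompact (polarDual P) :=
  Metric.isCompact_of_isClosed_isBounded (isClosed_polarDual P) (isBounded_polarDual h0)

/-- Otherwise `y ± ε • z` would lie in the polar dual for small `ε > 0`, with midpoint `y`. -/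
theorem exists_active_dotProduct_ne_zero {V : Finset (Fin d → ℝ)} {y : Fin d → ℝ}
    (hy : y ∈ (polarDual (V : Set (Fin d → ℝ))).extremePoints ℝ) {z : Fin d → ℝ} (hz : z ≠ 0) :
    ∃ w ∈ V, y ⬝ᵥ w = -1 ∧ z ⬝ᵥ w ≠ 0 := by
  by_contra! hpar
  have hnear : ∀ᶠ t in 𝓝 (0 : ℝ), ∀ w ∈ V, -1 ≤ (y + t • z) ⬝ᵥ w := by
    refine (Filter.eventually_all_finset V).2 fun w hw => ?_
    have hline : ∀ t : ℝ, (y + t • z) ⬝ᵥ w = y ⬝ᵥ w + t * z ⬝ᵥ w := fun t => by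
      rw [add_dotProduct, smul_dotProduct, smul_eq_mul]
    rcases (mem_polarDual.1 hy.1 w hw).eq_or_lt with hact | hinact
    · exact Eventually.of_forall fun t => by
        rw [hline, hpar w hw hact.symm, mul_zero, add_zero]
        exact hact.le
    · have hcont : Continuous fun t : ℝ => y ⬝ᵥ w + t * z ⬝ᵥ w := by fun_prop
      filter_upwards [(hcont.tendsto' 0 _ (by simp)).eventually_const_le hinact] with t ht
      rw [hline]
      exact ht
  obtain ⟨δ, hδ, hball⟩ := Metric.eventually_nhds_iff.1 hnear
  have hε : 0 < δ / 2 := half_pos hδ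
  have hdist : ∀ t : ℝ, |t| = δ / 2 → dist t 0 < δ := fun t ht => by
    rw [Real.dist_0_eq_abs, ht]; linarith
  have hseg : y ∈ openSegment ℝ (y + (δ / 2) • z) (y + (-(δ / 2)) • z) :=
    ⟨1 / 2, 1 / 2, by norm_num, by norm_num, by norm_num, by module⟩
  have hfix := (mem_extremePoints.1 hy).2 _ (hball (hdist _ (abs_of_pos hε)))
    _ (hball (hdist _ (by rw [abs_neg, abs_of_pos hε]))) hseg
  exact hz ((smul_eq_zero.1 (add_eq_left.1 hfix.1)).resolve_left hε.ne')

end General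

theorem exists_active_pair {V : Finset (Fin 2 → ℝ)} {y : Fin 2 → ℝ}
    (hy : y ∈ (polarDual (V : Set (Fin 2 → ℝ))).extremePoints ℝ) :
    ∃ v₁ ∈ V, ∃ v₂ ∈ V, y ⬝ᵥ v₁ = -1 ∧ y ⬝ᵥ v₂ = -1 ∧ v₁ 0 * v₂ 1 - v₁ 1 * v₂ 0 ≠ 0 := by
  obtain ⟨v₁, hv₁, hy₁, -⟩ := exists_active_dotProduct_ne_zero hy (z := ![1, 0]) (by simp)
  have hv₁0 : v₁ ≠ 0 := by rintro rfl; simp at hy₁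
  have hrot : ![-v₁ 1, v₁ 0] ≠ 0 := by
    contrapose! hv₁0
    ext i
    fin_cases i
    · simpa using congrFun hv₁0 1
    · simpa using congrFun hv₁0 0
  obtain ⟨v₂, hv₂, hy₂, hdet⟩ := exists_active_dotProduct_ne_zero hy hrot
  refine ⟨v₁, hv₁, v₂, hv₂, hy₁, hy₂, fun h => hdet ?_⟩
  simp only [dotProduct, Fin.sum_univ_two, Matrix.cons_val_zero, Matrix.cons_val_one]
  linear_combination h

theorem eq_zero_of_dotProduct_eq_zero {z v₁ v₂ : Fin 2 → ℝ} (hdet : v₁ 0 * v₂ 1 - v₁ 1 * v₂ 0 ≠ 0)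
    (h₁ : z ⬝ᵥ v₁ = 0) (h₂ : z ⬝ᵥ v₂ = 0) : z = 0 := by
  simp only [dotProduct, Fin.sum_univ_two] at h₁ h₂
  refine funext (Fin.forall_fin_two.2 ⟨?_, ?_⟩)
  · show z 0 = 0
    exact mul_left_cancel₀ hdet (by linear_combination v₂ 1 * h₁ - v₁ 1 * h₂)
  · show z 1 = 0
    exact mul_left_cancel₀ hdet (by linear_combination v₁ 0 * h₂ - v₂ 0 * h₁)

/-- Coordinates adapted to a primitive normal `n`: height `n ⬝ᵥ W` and position along the
line `n ⬝ᵥ x = n ⬝ᵥ W`, whose direction `![-n 1, n 0]` is primitive. -/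
theorem eq_height_smul_add_position_smul {n : Fin 2 → ℤ} {u v : ℤ} (huv : u * n 0 + v * n 1 = 1)
    (W : Fin 2 → ℤ) : W = (n ⬝ᵥ W) • ![u, v] + (u * W 1 - v * W 0) • ![-n 1, n 0] := by
  ext i
  fin_cases i
  · simp [dotProduct, Fin.sum_univ_two]
    linear_combination -W 0 * huv
  · simp [dotProduct, Fin.sum_univ_two]
    linear_combination -W 1 * huv

theorem exists_isCoprime_dotProduct_eq {W₁ W₂ : Fin 2 → ℤ}
    (hD : W₁ 0 * W₂ 1 - W₁ 1 * W₂ 0 ≠ 0) :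
    ∃ n : Fin 2 → ℤ, IsCoprime (n 0) (n 1) ∧ n ⬝ᵥ W₁ = n ⬝ᵥ W₂ ∧ n ⬝ᵥ W₁ ≠ 0 := by
  have hgcd : 0 < Int.gcd (W₁ 1 - W₂ 1) (W₂ 0 - W₁ 0) := by
    refine Int.gcd_pos_iff.2 (not_and_or.1 fun ⟨h₀, h₁⟩ => hD ?_)
    linear_combination -W₁ 0 * h₀ - W₁ 1 * h₁
  obtain ⟨g, m₀, m₁, hg, hcop, hm₀, hm₁⟩ := Int.exists_gcd_one' hgcd
  have hdot : ∀ W : Fin 2 → ℤ, ![m₀, m₁] ⬝ᵥ W * g = (W₁ 1 - W₂ 1) * W 0 + (W₂ 0 - W₁ 0) * W 1 :=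
    fun W => by simp [dotProduct, Fin.sum_univ_two, hm₀, hm₁]; ring
  have hg0 : (g : ℤ) ≠ 0 := by positivity
  refine ⟨![m₀, m₁], Int.isCoprime_iff_gcd_eq_one.2 hcop, ?_, ?_⟩
  · exact mul_right_cancel₀ hg0 (by rw [hdot, hdot]; ring)
  · exact fun h => hD (by linear_combination hdot W₁ - (g : ℤ) * h)

section IPPolygon

variable {Δ : Set (Fin 2 → ℝ)} (hΔ : Convex ℝ Δ) (h0 : (0 : Fin 2 → ℝ) ∈ interior Δ)
  (huniq : ∀ x ∈ interior Δ, IsLatticePoint x → x = 0)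
include hΔ h0 huniq

/-- If `a ≥ 2`, the line at height `a - 1` meets the triangle `0 W₁ W₂` in the segment of
positions `[(a - 1) c₁ / a, (a - 1) c₂ / a]`. Among the `a` consecutive integers from `(a - 1) c₁`
there is a multiple `j a`, and since `c₂ ≥ c₁ + 1` the lattice point `X` at position `j` lies on
this segment, hence in the interior of `Δ`. -/
theorem dotProduct_le_one_of_position_lt {n : Fin 2 → ℤ} {u v : ℤ}
    (huv : u * n 0 + v * n 1 = 1) {W₁ W₂ : Fin 2 → ℤ}
    (h₁ : (Int.cast ∘ W₁ : Fin 2 → ℝ) ∈ Δ) (h₂ : (Int.cast ∘ W₂ : Fin 2 → ℝ) ∈ Δ)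
    (heq : n ⬝ᵥ W₁ = n ⬝ᵥ W₂) (hlt : u * W₁ 1 - v * W₁ 0 < u * W₂ 1 - v * W₂ 0) :
    n ⬝ᵥ W₁ ≤ 1 := by
  set a := n ⬝ᵥ W₁
  set c₁ := u * W₁ 1 - v * W₁ 0
  set c₂ := u * W₂ 1 - v * W₂ 0
  by_contra! ha
  obtain ⟨j, ⟨hj₁, hj₂⟩, -⟩ := existsUnique_add_zsmul_mem_Ico (by omega : 0 < a) 0 ((a - 1) * c₁)
  rw [zero_add, smul_eq_mul] at hj₁ hj₂
  set X : Fin 2 → ℤ := (a - 1) • ![u, v] + j • ![-n 1, n 0]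
  have hW₁ : W₁ = a • ![u, v] + c₁ • ![-n 1, n 0] := eq_height_smul_add_position_smul huv W₁
  have hW₂ : W₂ = a • ![u, v] + c₂ • ![-n 1, n 0] := by
    rw [heq]; exact eq_height_smul_add_position_smul huv W₂
  have hX : (a * (c₂ - c₁)) • X = ((a - 1) * c₂ - j * a) • W₁ + (j * a - (a - 1) * c₁) • W₂ := by
    rw [hW₁, hW₂]; module
  have hXr : ((a * (c₂ - c₁) : ℤ) : ℝ) • (Int.cast ∘ X : Fin 2 → ℝ) =
      (((a - 1) * c₂ - j * a : ℤ) : ℝ) • (Int.cast ∘ W₁) +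
        ((j * a - (a - 1) * c₁ : ℤ) : ℝ) • (Int.cast ∘ W₂) := by
    ext i
    simpa using congrArg (fun V : Fin 2 → ℤ => (V i : ℝ)) hX
  have hXint := hΔ.mem_interior_of_smul_eq h0 h₁ h₂ (by exact_mod_cast (by nlinarith))
    (by exact_mod_cast (by linarith)) (by exact_mod_cast (by nlinarith)) hXr
  have hX0 : X = 0 := funext fun i => by
    simpa using congrFun (huniq _ hXint (isLatticePoint_intCast X)) i
  have hnX : n ⬝ᵥ X = a - 1 := by
    simp [X, dotProduct, Fin.sum_univ_two]
    linear_combination (a - 1) * huv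
  rw [hX0, dotProduct_zero] at hnX
  omega

theorem dotProduct_le_one {n : Fin 2 → ℤ} (hn : IsCoprime (n 0) (n 1)) {W₁ W₂ : Fin 2 → ℤ}
    (hne : W₁ ≠ W₂) (h₁ : (Int.cast ∘ W₁ : Fin 2 → ℝ) ∈ Δ) (h₂ : (Int.cast ∘ W₂ : Fin 2 → ℝ) ∈ Δ)
    (heq : n ⬝ᵥ W₁ = n ⬝ᵥ W₂) : n ⬝ᵥ W₁ ≤ 1 := by
  obtain ⟨u, v, huv⟩ := hn
  have hpos : u * W₁ 1 - v * W₁ 0 ≠ u * W₂ 1 - v * W₂ 0 := fun h => hne <| by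
    rw [eq_height_smul_add_position_smul huv W₁, eq_height_smul_add_position_smul huv W₂, heq, h]
  rcases hpos.lt_or_gt with hlt | hlt
  · exact dotProduct_le_one_of_position_lt hΔ h0 huniq huv h₁ h₂ heq hlt
  · exact heq ▸ dotProduct_le_one_of_position_lt hΔ h0 huniq huv h₂ h₁ heq.symm hlt

/-- The edge through `v₁, v₂` has a primitive normal `n` at height `±1` by
`dotProduct_le_one`, and then `y = ∓ n`. -/
theorem isLatticePoint_of_dotProduct_eq_neg_one {y v₁ v₂ : Fin 2 → ℝ} (hv₁ : v₁ ∈ Δ)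
    (hv₂ : v₂ ∈ Δ) (hl₁ : IsLatticePoint v₁) (hl₂ : IsLatticePoint v₂) (hy₁ : y ⬝ᵥ v₁ = -1)
    (hy₂ : y ⬝ᵥ v₂ = -1) (hdet : v₁ 0 * v₂ 1 - v₁ 1 * v₂ 0 ≠ 0) : IsLatticePoint y := by
  obtain ⟨W₁, rfl⟩ := isLatticePoint_iff.1 hl₁
  obtain ⟨W₂, rfl⟩ := isLatticePoint_iff.1 hl₂
  have hD : W₁ 0 * W₂ 1 - W₁ 1 * W₂ 0 ≠ 0 := by
    simpa only [Function.comp_apply, ← Int.cast_mul, ← Int.cast_sub, Int.cast_ne_zero] using hdet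
  have hne : W₁ ≠ W₂ := by rintro rfl; exact hD (by ring)
  obtain ⟨n, hn, heq, ha⟩ := exists_isCoprime_dotProduct_eq hD
  have hle := dotProduct_le_one hΔ h0 huniq hn hne hv₁ hv₂ heq
  have hge := dotProduct_le_one hΔ h0 huniq (n := -n) hn.neg_neg hne hv₁ hv₂
    (by rw [neg_dotProduct, neg_dotProduct, heq])
  rw [neg_dotProduct] at hge
  have ha : n ⬝ᵥ W₁ * n ⬝ᵥ W₁ = 1 := by
    rcases (by omega : n ⬝ᵥ W₁ = 1 ∨ n ⬝ᵥ W₁ = -1) with h | h <;> simp [h]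
  have hy : y = Int.cast ∘ (-(n ⬝ᵥ W₁) • n) := by
    rw [← sub_eq_zero]
    refine eq_zero_of_dotProduct_eq_zero hdet ?_ ?_
    · rw [sub_dotProduct, hy₁, intCast_dotProduct, smul_dotProduct, smul_eq_mul, neg_mul, ha]
      norm_num
    · rw [sub_dotProduct, hy₂, intCast_dotProduct, smul_dotProduct, smul_eq_mul, neg_mul, ← heq,
        ha]
      norm_num
  exact hy ▸ isLatticePoint_intCast _

end IPPolygon

/-- every IP polygon is reflexive. -/
theorem IP_polygon_is_reflexive (Δ : Set (Fin 2 → ℝ)) (h : IsIPPolytope Δ) :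
    IsLatticePolytope (polarDual Δ) := by
  obtain ⟨⟨V, hV, rfl⟩, h0, huniq⟩ := h
  refine (isCompact_polarDual h0).isLatticePolytope (convex_polarDual _) fun y hy => ?_
  rw [polarDual_convexHull] at hy
  obtain ⟨v₁, hv₁, v₂, hv₂, hy₁, hy₂, hdet⟩ := exists_active_pair hy
  exact isLatticePoint_of_dotProduct_eq_neg_one (convex_convexHull ℝ _) h0 huniq
    (subset_convexHull ℝ _ hv₁) (subset_convexHull ℝ _ hv₂) (hV v₁ hv₁) (hV v₂ hv₂) hy₁ hy₂ hdet
end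

section
/- Let Z_N denote the number of involutions of a set with N elements (Z_0 = 1). Then the exponential generating function of (Z_N) satisfies Σ_{N≥0} (Z_N / N!) x^N = exp(x + x²/2) as an identity of formal power series over ℚ (equivalently, for every real x). -/
/-- `Z N`: the number of involutions of an `N`-element set (`Z 0 = 1`). -/
noncomputable def numInvolutions (N : ℕ) : ℕ := Nat.card {σ : Equiv.Perm (Fin N) // σ * σ = 1}

/-!
Sorting the involutions of `Fin (n + 2)` by the image of `0` gives the recurrence
`Z (n + 2) = Z (n + 1) + (n + 1) * Z n`: an involution fixing `0` is an involution of the other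
`n + 1` points, and one swapping `0` with `i ≠ 0` is an involution of the remaining `n` points.
The entire function `f z = exp (z + z² / 2)` satisfies `f' = (1 + z) f`, and differentiating this
`n + 1` times gives `f⁽ⁿ⁺²⁾ = (1 + z) f⁽ⁿ⁺¹⁾ + (n + 1) f⁽ⁿ⁾`. So the Taylor coefficients
`f⁽ⁿ⁾(0)` obey the same recurrence and initial values as `Z n`, and the Taylor expansion of `f`
at `0` is the series in question.
-/

open Equiv Finset

theorem Commute.mul_mul_self_eq_one {M : Type*} [Monoid M] {a b : M} (h : Commute a b)
    (ha : a * a = 1) (hb : b * b = 1) : a * b * (a * b) = 1 := by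
  rw [← sq, h.mul_pow, sq, sq, ha, hb, one_mul]

def MulEquiv.involutionsCongr {M N : Type*} [Monoid M] [Monoid N] (e : M ≃* N) :
    {a : M // a * a = 1} ≃ {b : N // b * b = 1} :=
  e.toEquiv.subtypeEquiv fun a => by
    change a * a = 1 ↔ e a * e a = 1
    rw [← map_mul, MulEquiv.map_eq_one_iff]

theorem card_involutions (α : Type*) [Finite α] :
    Nat.card {σ : Perm α // σ * σ = 1} = numInvolutions (Nat.card α) :=
  Nat.card_congr (Finite.equivFin α).permCongrHom.involutionsCongr

namespace Equiv.Perm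

variable {α : Type*}

theorem card_involutions_eq_sum [Fintype α] (z : α) :
    Nat.card {σ : Perm α // σ * σ = 1} =
      ∑ i, Nat.card {σ : Perm α // σ * σ = 1 ∧ σ z = i} := by
  rw [← Nat.card_congr (sigmaFiberEquiv fun σ : {σ : Perm α // σ * σ = 1} => σ.1 z),
    Nat.card_sigma]
  exact sum_congr rfl fun i _ =>
    Nat.card_congr (subtypeSubtypeEquivSubtypeInter (fun σ : Perm α => σ * σ = 1) (· z = i))

variable [DecidableEq α]

theorem commute_swap_of_swap_apply_eq {σ : Perm α} {z i : α}
    (h : swap (σ z) (σ i) = swap z i) : Commute σ (swap z i) := by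
  rw [Commute, SemiconjBy, mul_swap_eq_swap_mul, h]

def involutionsFixingEquiv (s : Finset α) :
    {σ : Perm α // (∀ a ∈ s, σ a = a) ∧ σ * σ = 1} ≃ {τ : Perm {a // a ∉ s} // τ * τ = 1} :=
  calc {σ : Perm α // (∀ a ∈ s, σ a = a) ∧ σ * σ = 1}
      ≃ {σ : Perm α // (∀ a, ¬a ∉ s → σ a = a) ∧ σ * σ = 1} :=
        subtypeEquivRight fun σ => by simp only [not_not]
    _ ≃ {σ : {σ : Perm α // ∀ a, ¬a ∉ s → σ a = a} // σ.1 * σ.1 = 1} :=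
        (subtypeSubtypeEquivSubtypeInter _ (fun σ : Perm α => σ * σ = 1)).symm
    _ ≃ {τ : Perm {a // a ∉ s} // τ * τ = 1} :=
        ((Perm.subtypeEquivSubtypePerm _).subtypeEquiv fun τ => by
          simp only [subtypeEquivSubtypePerm_apply_coe, ← map_mul,
            map_eq_one_iff _ ofSubtype_injective]).symm

/-- For `i = z` the transposition is `1` and this is the identity. -/
def involutionsApplyEquiv (z i : α) :
    {σ : Perm α // σ * σ = 1 ∧ σ z = i} ≃
      {σ : Perm α // (∀ a ∈ ({z, i} : Finset α), σ a = a) ∧ σ * σ = 1} where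
  toFun σ := ⟨σ.1 * swap z i, by
    obtain ⟨σ, hσ, rfl⟩ := σ
    have hσσ : σ (σ z) = z := by rw [← Perm.mul_apply, hσ, one_apply]
    refine ⟨by simp [hσσ], ?_⟩
    exact (commute_swap_of_swap_apply_eq (by rw [hσσ, swap_comm])).mul_mul_self_eq_one hσ
      (swap_mul_self _ _)⟩
  invFun σ := ⟨σ.1 * swap z i, by
    obtain ⟨σ, hfix, hσ⟩ := σ
    simp only [mem_insert, mem_singleton, forall_eq_or_imp, forall_eq] at hfix
    refine ⟨?_, by simp [hfix.2]⟩
    exact (commute_swap_of_swap_apply_eq (by rw [hfix.1, hfix.2])).mul_mul_self_eq_one hσ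
      (swap_mul_self _ _)⟩
  left_inv σ := Subtype.ext (mul_swap_mul_self _ _ _)
  right_inv σ := Subtype.ext (mul_swap_mul_self _ _ _)

theorem card_involutions_apply_eq [Fintype α] (z i : α) :
    Nat.card {σ : Perm α // σ * σ = 1 ∧ σ z = i} =
      numInvolutions (Fintype.card α - #{z, i}) := by
  rw [Nat.card_congr ((involutionsApplyEquiv z i).trans (involutionsFixingEquiv _)),
    card_involutions, Nat.card_eq_fintype_card, Fintype.card_subtype_compl, Fintype.card_coe]

end Equiv.Perm

theorem numInvolutions_zero : numInvolutions 0 = 1 := by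
  rw [numInvolutions, Nat.card_eq_fintype_card]; decide

theorem numInvolutions_one : numInvolutions 1 = 1 := by
  rw [numInvolutions, Nat.card_eq_fintype_card]; decide

theorem numInvolutions_add_two (n : ℕ) :
    numInvolutions (n + 2) = numInvolutions (n + 1) + (n + 1) * numInvolutions n := by
  have h := Perm.card_involutions_eq_sum (0 : Fin (n + 2))
  rw [card_involutions, Nat.card_eq_fintype_card, Fintype.card_fin, Fin.sum_univ_succ] at h
  simp only [Perm.card_involutions_apply_eq, Fintype.card_fin, pair_eq_singleton, card_singleton,
    card_pair (Fin.succ_ne_zero _).symm, sum_const, card_univ, smul_eq_mul] at h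
  rwa [show n + 2 - 1 = n + 1 from rfl, Nat.add_sub_cancel] at h

section IteratedDeriv

variable {𝕜 : Type*} [NontriviallyNormedField 𝕜] {f : 𝕜 → 𝕜}

theorem iteratedDeriv_add_two_of_deriv_eq (hf : ContDiff 𝕜 ⊤ f)
    (hderiv : ∀ z, deriv f z = (1 + z) * f z) (n : ℕ) (z : 𝕜) :
    iteratedDeriv (n + 2) f z =
      (1 + z) * iteratedDeriv (n + 1) f z + (n + 1) * iteratedDeriv n f z := by
  have hD (m : ℕ) (z : 𝕜) : HasDerivAt (iteratedDeriv m f) (iteratedDeriv (m + 1) f z) z := by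
    rw [iteratedDeriv_succ]
    exact (hf.differentiable_iteratedDeriv m (WithTop.coe_lt_top _) z).hasDerivAt
  have hmul (m : ℕ) (z : 𝕜) : HasDerivAt (fun w => (1 + w) * iteratedDeriv m f w)
      (1 * iteratedDeriv m f z + (1 + z) * iteratedDeriv (m + 1) f z) z :=
    ((hasDerivAt_id z).const_add 1).fun_mul (hD m z)
  induction n generalizing z with
  | zero =>
    have h1 : (fun w => (1 + w) * iteratedDeriv 0 f w) = iteratedDeriv 1 f := by
      ext w; rw [iteratedDeriv_one, hderiv, iteratedDeriv_zero]
    rw [(hD 1 z).unique (h1 ▸ hmul 0 z), ← h1]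
    ring
  | succ n ih =>
    have h := (hmul (n + 1) z).fun_add ((hD n z).const_mul ((n : 𝕜) + 1))
    rw [← funext ih] at h
    rw [(hD (n + 2) z).unique h]
    push_cast
    ring

theorem iteratedDeriv_at_zero_eq_numInvolutions (hf : ContDiff 𝕜 ⊤ f)
    (hderiv : ∀ z, deriv f z = (1 + z) * f z) (hf0 : f 0 = 1) (n : ℕ) :
    iteratedDeriv n f 0 = numInvolutions n := by
  induction n using Nat.twoStepInduction with
  | zero => rw [iteratedDeriv_zero, hf0, numInvolutions_zero, Nat.cast_one]
  | one => rw [iteratedDeriv_one, hderiv, hf0, numInvolutions_one, add_zero, mul_one, Nat.cast_one]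
  | more n ih₀ ih₁ =>
    rw [iteratedDeriv_add_two_of_deriv_eq hf hderiv, ih₀, ih₁, numInvolutions_add_two]
    push_cast
    ring

end IteratedDeriv

theorem deriv_cexp_add_sq_div_two (z : ℂ) :
    deriv (fun w => Complex.exp (w + w ^ 2 / 2)) z = (1 + z) * Complex.exp (z + z ^ 2 / 2) := by
  rw [((hasDerivAt_id' z).fun_add ((hasDerivAt_pow 2 z).div_const 2)).cexp.deriv]
  ring

theorem hasSum_numInvolutions_div_factorial_mul_pow (x : ℝ) :
    HasSum (fun N : ℕ => (numInvolutions N : ℝ) / N.factorial * x ^ N)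
      (Real.exp (x + x ^ 2 / 2)) := by
  have hdiff : Differentiable ℂ fun w : ℂ => Complex.exp (w + w ^ 2 / 2) := by fun_prop
  have hterm (N : ℕ) : (N.factorial : ℂ)⁻¹ • ((x : ℂ) - 0) ^ N • (numInvolutions N : ℂ) =
      numInvolutions N / N.factorial * (x : ℂ) ^ N := by
    rw [sub_zero, smul_eq_mul, smul_eq_mul]
    ring
  have h := Complex.hasSum_taylorSeries_of_entire hdiff 0 x
  rw [← Complex.hasSum_ofReal]
  push_cast
  simpa only [iteratedDeriv_at_zero_eq_numInvolutions hdiff.contDiff deriv_cexp_add_sq_div_two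
    (by simp), hterm] using h

/-- the exponential generating function of the numbers of involutions is
`exp (x + x²/2)`: for every real `x`, `Σ_{N≥0} (Z_N / N!) x^N = exp (x + x²/2)`. -/
theorem egf_numInvolutions (x : ℝ) :
    ∑' N : ℕ, ((numInvolutions N : ℝ) / N.factorial) * x ^ N
      = Real.exp (x + x ^ 2 / 2) :=
  (hasSum_numInvolutions_div_factorial_mul_pow x).tsum_eq
end
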